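/- (Hölder perturbation of likelihood-ratio second moments, part ii) Under the same hypotheses (h ≥ ρ pointwise and |h(x;θ₁) − h(x;θ₂)| ≤ L|θ₁ − θ₂|^{1+k} for all x), for any θ₁, θ₂, θ_j: E_{θ₂}[W_{j2}²] ≤ E_{θ₁}[W_{j1}²]·(1 + (L/ρ)|θ₁ − θ₂|^{1+k}). -/

import Mathlib

open MeasureTheory

lemma div_le_one_add_div_of_abs_sub_le {a b ρ δ : ℝ} (hρ : 0 < ρ) (hb : ρ ≤ b)
    (hab : |a - b| ≤ δ) : a / b ≤ 1 + δ / ρ := by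
  have hb0 : 0 < b := hρ.trans_le hb
  calc a / b = 1 + (a - b) / b := by field_simp; ring
    _ ≤ 1 + |a - b| / ρ := by
      gcongr 1 + ?_
      exact div_le_div₀ (abs_nonneg _) (le_abs_self _) hρ hb
    _ ≤ 1 + δ / ρ := by gcongr

lemma sq_div_mul_le_sq_div_mul_mul {a b c C : ℝ} (ha : 0 < a) (hb : 0 < b)
    (hab : a / b ≤ C) : (c / b) ^ 2 * b ≤ (c / a) ^ 2 * a * C :=
  calc (c / b) ^ 2 * b = (c / a) ^ 2 * a * (a / b) := by field_simp
    _ ≤ (c / a) ^ 2 * a * C := by gcongr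

theorem integral_sq_div_mul_le_of_div_le {α : Type*} [MeasurableSpace α] {μ : Measure α}
    {f g₁ g₂ : α → ℝ} {C : ℝ} (hg₁ : ∀ᵐ x ∂μ, 0 < g₁ x) (hg₂ : ∀ᵐ x ∂μ, 0 < g₂ x)
    (hC : ∀ᵐ x ∂μ, g₁ x / g₂ x ≤ C) (hint : Integrable (fun x => (f x / g₁ x) ^ 2 * g₁ x) μ) :
    ∫ x, (f x / g₂ x) ^ 2 * g₂ x ∂μ ≤ (∫ x, (f x / g₁ x) ^ 2 * g₁ x ∂μ) * C := by
  rw [← integral_mul_const]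
  -- The left integrand is nonnegative, so its integrability is not needed.
  refine integral_mono_of_nonneg ?_ (hint.mul_const C) ?_
  · filter_upwards [hg₂] with x hx using by positivity
  · filter_upwards [hg₁, hg₂, hC] with x h₁ h₂ hx using sq_div_mul_le_sq_div_mul_mul h₁ h₂ hx

theorem lr_second_moment_holder_perturbation_ii_general {α : Type*} [MeasurableSpace α]
    (μ : Measure α) (θ₁ θ₂ L ρ k : ℝ) (hρ : 0 < ρ)
    (h1 h2 hj : α → ℝ)
    (hlb1 : ∀ x, ρ ≤ h1 x) (hlb2 : ∀ x, ρ ≤ h2 x)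
    (hholder : ∀ x, |h1 x - h2 x| ≤ L * |θ₁ - θ₂| ^ (1 + k))
    (hWj1sq : Integrable (fun x => (hj x / h1 x) ^ 2 * h1 x) μ) :
    ∫ x, (hj x / h2 x) ^ 2 * h2 x ∂μ
      ≤ (∫ x, (hj x / h1 x) ^ 2 * h1 x ∂μ)
          * (1 + (L / ρ) * |θ₁ - θ₂| ^ (1 + k)) := by
  refine integral_sq_div_mul_le_of_div_le (.of_forall fun x => hρ.trans_le (hlb1 x))
    (.of_forall fun x => hρ.trans_le (hlb2 x)) (.of_forall fun x => ?_) hWj1sq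
  rw [div_mul_eq_mul_div]
  exact div_le_one_add_div_of_abs_sub_le hρ (hlb2 x) (hholder x)

/-- Hölder perturbation of likelihood-ratio second moments, part (ii): under
`h(x;θ) ≥ ρ > 0` pointwise and `|h(x;θ₁) − h(x;θ₂)| ≤ L|θ₁ − θ₂|^{1+k}` for all `x`,
`E_{θ₂}[W_{j2}²] ≤ E_{θ₁}[W_{j1}²]·(1 + (L/ρ)|θ₁ − θ₂|^{1+k})`, where
`W_{jb} = h(·;θ_j)/h(·;θ_b)` and `E_{θ_b}` integrates against density `h(·;θ_b)`. -/
theorem lr_second_moment_holder_perturbation_ii {α : Type*} [MeasurableSpace α]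
    (μ : Measure α) (θ₁ θ₂ θj L ρ k : ℝ) (hL : 0 < L) (hρ : 0 < ρ) (hk : 0 < k)
    (h1 h2 hj : α → ℝ)
    (hmeas1 : Measurable h1) (hmeas2 : Measurable h2) (hmeasj : Measurable hj)
    (hlb1 : ∀ x, ρ ≤ h1 x) (hlb2 : ∀ x, ρ ≤ h2 x) (hlbj : ∀ x, ρ ≤ hj x)
    (hholder : ∀ x, |h1 x - h2 x| ≤ L * |θ₁ - θ₂| ^ (1 + k))
    (hWj1sq : Integrable (fun x => (hj x / h1 x) ^ 2 * h1 x) μ) :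
    ∫ x, (hj x / h2 x) ^ 2 * h2 x ∂μ
      ≤ (∫ x, (hj x / h1 x) ^ 2 * h1 x ∂μ)
          * (1 + (L / ρ) * |θ₁ - θ₂| ^ (1 + k)) :=
  lr_second_moment_holder_perturbation_ii_general μ θ₁ θ₂ L ρ k hρ h1 h2 hj hlb1 hlb2 hholder hWj1sq
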